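/- Let G act by automorphisms on a simplicial poset P. Then the quotient P/G is a simplicial poset if and only if the action is translative. -/

import Mathlib

/-!
If the action is translative and `q, g • q ≤ p`, then `g • q = q`; hence `q ↦ Gq` identifies
the interval `[0̂, p]` of `P` with the interval below `Gp` in `P/G`, and antisymmetry of `P/G`
follows the same way.

Conversely, suppose `p ≠ g • p` have a common upper bound `u`. An element of the Boolean
interval `[0̂, u]` is determined by the atoms below it, so some atom `a ≤ u` is moved by an
element of `G` that keeps it below `u`. The join `r` of the distinct atoms `a` and `g • a` has
`[0̂, r] = {0̂, a, g • a, r}`, so the interval below `Gr` in `P/G` is the three-element chain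
`G0̂ < Ga < Gr`, whose size is not a power of two.
-/

/-- The order relation on the set of `G`-orbits of a poset `P`:
`X ≤ Y` iff some representative of `X` lies below some representative of `Y`
(for order-preserving actions this is the relation `Gp ≤ Gq ↔ ∃ g, g • p ≤ q`). -/
def QLe {G P : Type*} [Group G] [Preorder P] [MulAction G P]
    (X Y : Quotient (MulAction.orbitRel G P)) : Prop :=
  ∃ p q : P, Quotient.mk (MulAction.orbitRel G P) p = X ∧
    Quotient.mk (MulAction.orbitRel G P) q = Y ∧ p ≤ q

open MulAction

theorem eq_iff_atom_le_iff_of_orderIso_finset {α ι : Type*} [PartialOrder α] [OrderBot α]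
    (e : α ≃o Finset ι) {x y : α} : x = y ↔ ∀ c, IsAtom c → (c ≤ x ↔ c ≤ y) := by
  refine ⟨fun h _ _ ↦ h ▸ Iff.rfl, fun h ↦ e.injective (Finset.ext fun i ↦ ?_)⟩
  have hi := h (e.symm {i}) ((e.symm.isAtom_iff _).2 (Finset.isAtom_singleton i))
  simpa only [e.symm_apply_le, Finset.singleton_subset_iff] using hi

theorem exists_Iic_eq_of_isAtom {P ι : Type*} [PartialOrder P] [OrderBot P] {u a b : P}
    (e : Set.Iic u ≃o Finset ι) (ha : IsAtom a) (hb : IsAtom b) (hau : a ≤ u) (hbu : b ≤ u) :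
    ∃ r, Set.Iic r = {⊥, a, b, r} := by
  classical
  obtain ⟨i, hi⟩ := Finset.isAtom_iff.1 ((e.isAtom_iff _).2 (ha.Iic hau))
  obtain ⟨j, hj⟩ := Finset.isAtom_iff.1 ((e.isAtom_iff _).2 (hb.Iic hbu))
  set r := e.symm {i, j}
  refine ⟨r, Set.ext fun z ↦ ⟨fun hz ↦ ?_, ?_⟩⟩
  · have hzu : z ≤ u := hz.trans r.2
    have eq_of_map_eq {w : P} (hw : w ≤ u) (h : e ⟨z, hzu⟩ = e ⟨w, hw⟩) : z = w :=
      congrArg Subtype.val (e.injective h)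
    have hez : e ⟨z, hzu⟩ ⊆ {i, j} := e.le_symm_apply.1 (show ⟨z, hzu⟩ ≤ r from hz)
    replace hez := Finset.coe_subset.2 hez
    rw [Finset.coe_pair] at hez
    rcases Set.subset_pair_iff_eq.1 hez with h | h | h | h <;> norm_cast at h
    · exact .inl (eq_of_map_eq bot_le (h.trans e.map_bot.symm))
    · exact .inr (.inl (eq_of_map_eq hau (h.trans hi.symm)))
    · exact .inr (.inr (.inl (eq_of_map_eq hbu (h.trans hj.symm))))
    · exact .inr (.inr (.inr (eq_of_map_eq r.2 (h.trans (e.apply_symm_apply _).symm))))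
  · rintro (h | h | h | h) <;> rw [Set.mem_Iic, h]
    · exact bot_le
    · exact show ⟨a, hau⟩ ≤ r from e.le_symm_apply.2 (by simp [hi])
    · exact show ⟨b, hbu⟩ ≤ r from e.le_symm_apply.2 (by simp [hj])

def IsTranslative (G P : Type*) [Group G] [Preorder P] [MulAction G P] : Prop :=
  ∀ (p : P) (g : G), (∃ u : P, p ≤ u ∧ g • p ≤ u) → g • p = p

section OrbitQuotient

variable {G P : Type*} [Group G]

theorem orbitRel_mk_eq_mk_iff [MulAction G P] {a b : P} :
    Quotient.mk (orbitRel G P) a = Quotient.mk _ b ↔ ∃ g : G, g • b = a :=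
  Quotient.eq.trans (orbitRel_apply.trans mem_orbit_iff)

variable [PartialOrder P] [MulAction G P]

def iicToQLe (p : P) (x : Set.Iic p) : {Y // QLe Y (Quotient.mk (orbitRel G P) p)} :=
  ⟨Quotient.mk _ x, x, p, rfl, rfl, x.2⟩

variable (hact : ∀ (g : G) (x y : P), x ≤ y ↔ g • x ≤ g • y)
include hact

def smulOrderIso (g : G) : P ≃o P :=
  ⟨toPerm g, (hact g _ _).symm⟩

theorem qLe_mk_mk_iff {x y : P} :
    QLe (Quotient.mk (orbitRel G P) x) (Quotient.mk _ y) ↔ ∃ g : G, g • x ≤ y := by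
  refine ⟨?_, fun ⟨g, hg⟩ ↦ ⟨g • x, y, orbitRel.Quotient.quotient_smul_eq, rfl, hg⟩⟩
  rintro ⟨a, b, ha, hb, hab⟩
  obtain ⟨g, rfl⟩ := orbitRel_mk_eq_mk_iff.1 ha
  obtain ⟨k, rfl⟩ := orbitRel_mk_eq_mk_iff.1 hb
  exact ⟨k⁻¹ * g, by rwa [hact k, mul_smul, smul_inv_smul]⟩

theorem setOf_qLe_mk_eq_image (p : P) :
    {Y | QLe Y (Quotient.mk (orbitRel G P) p)} = Quotient.mk _ '' Set.Iic p := by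
  ext Y
  induction Y using Quotient.inductionOn with | h y => ?_
  refine ⟨fun h ↦ ?_, fun ⟨x, hx, hxy⟩ ↦ hxy ▸ ⟨x, p, rfl, rfl, hx⟩⟩
  obtain ⟨g, hg⟩ := (qLe_mk_mk_iff hact).1 h
  exact ⟨g • y, hg, orbitRel.Quotient.quotient_smul_eq⟩

theorem iicToQLe_surjective (p : P) : Function.Surjective (iicToQLe (G := G) p) := by
  rintro ⟨Y, hY⟩
  obtain ⟨x, hx, rfl⟩ := (setOf_qLe_mk_eq_image hact p).subset hY
  exact ⟨⟨x, hx⟩, rfl⟩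

section Translative

variable (htr : IsTranslative G P)
include htr

theorem le_of_qLe_mk_mk {p q q' : P} (hq : q ≤ p) (hq' : q' ≤ p)
    (h : QLe (Quotient.mk (orbitRel G P) q) (Quotient.mk _ q')) : q ≤ q' := by
  obtain ⟨g, hg⟩ := (qLe_mk_mk_iff hact).1 h
  rwa [htr q g ⟨p, hq, hg.trans hq'⟩] at hg

theorem qLe_antisymm (X Y : Quotient (orbitRel G P)) (hXY : QLe X Y) (hYX : QLe Y X) :
    X = Y := by
  induction X using Quotient.inductionOn with | h x => ?_
  induction Y using Quotient.inductionOn with | h y => ?_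
  obtain ⟨g, hg⟩ := (qLe_mk_mk_iff hact).1 hXY
  rw [← orbitRel.Quotient.quotient_smul_eq (g := g) (a := x)] at hYX ⊢
  exact congrArg _ (le_antisymm hg (le_of_qLe_mk_mk hact htr le_rfl hg hYX))

theorem qLe_iicToQLe_iff {p : P} {x y : Set.Iic p} :
    QLe (iicToQLe (G := G) p x).1 (iicToQLe p y).1 ↔ x ≤ y :=
  ⟨le_of_qLe_mk_mk hact htr x.2 y.2, fun h ↦ ⟨x, y, rfl, rfl, h⟩⟩

theorem iicToQLe_injective (p : P) : Function.Injective (iicToQLe (G := G) p) := by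
  intro x y h
  refine le_antisymm ((qLe_iicToQLe_iff hact htr).1 ?_) ((qLe_iicToQLe_iff hact htr).1 ?_) <;>
    rw [h] <;> exact ⟨y, y, rfl, rfl, le_rfl⟩

theorem exists_equiv_qLe_of_orderIso {p : P} {β : Type*} [Preorder β] (ι : Set.Iic p ≃o β) :
    ∃ e : {Y // QLe Y (Quotient.mk (orbitRel G P) p)} ≃ β, ∀ A B, QLe A.1 B.1 ↔ e A ≤ e B := by
  let f := Equiv.ofBijective _ ⟨iicToQLe_injective hact htr p, iicToQLe_surjective hact p⟩
  refine ⟨f.symm.trans ι.toEquiv, fun A B ↦ ?_⟩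
  obtain ⟨x, rfl⟩ := f.surjective A
  obtain ⟨y, rfl⟩ := f.surjective B
  simp only [Equiv.trans_apply, Equiv.symm_apply_apply]
  exact (qLe_iicToQLe_iff hact htr).trans ι.le_iff_le.symm

end Translative

section OrderBot

variable [OrderBot P]

theorem mk_eq_mk_bot_iff {x : P} :
    Quotient.mk (orbitRel G P) x = Quotient.mk _ ⊥ ↔ x = ⊥ := by
  refine ⟨fun h ↦ ?_, fun h ↦ h ▸ rfl⟩
  obtain ⟨g, rfl⟩ := orbitRel_mk_eq_mk_iff.1 h
  exact (smulOrderIso hact g).map_bot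

theorem exists_ncard_setOf_qLe_eq_three {ι : Type*} {a u : P} {g : G}
    (e : Set.Iic u ≃o Finset ι) (ha : IsAtom a) (hau : a ≤ u) (hgau : g • a ≤ u)
    (hne : g • a ≠ a) : ∃ X : Quotient (orbitRel G P), {Y | QLe Y X}.ncard = 3 := by
  have hga : IsAtom (g • a) := ((smulOrderIso hact g).isAtom_iff a).2 ha
  obtain ⟨r, hr⟩ := exists_Iic_eq_of_isAtom e ha hga hau hgau
  have hle : ∀ x ∈ ({⊥, a, g • a, r} : Set P), x ≤ r := fun x hx ↦ by rwa [← Set.mem_Iic, hr]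
  refine ⟨Quotient.mk _ r, Set.ncard_eq_three.2
    ⟨Quotient.mk _ ⊥, Quotient.mk _ a, Quotient.mk _ r, ?_, ?_, ?_, ?_⟩⟩
  · exact fun h ↦ ha.1 ((mk_eq_mk_bot_iff hact).1 h.symm)
  · exact fun h ↦ ha.1 (le_bot_iff.1 (((mk_eq_mk_bot_iff hact).1 h.symm) ▸ hle a (by simp)))
  · intro h
    obtain ⟨k, hk⟩ := orbitRel_mk_eq_mk_iff.1 h.symm
    have hr_atom : IsAtom r := hk ▸ ((smulOrderIso hact k).isAtom_iff a).2 ha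
    have eq_r {x : P} (hx : IsAtom x) (hxr : x ≤ r) : x = r :=
      (hr_atom.le_iff.1 hxr).resolve_left hx.1
    exact hne ((eq_r hga (hle _ (by simp))).trans (eq_r ha (hle a (by simp))).symm)
  · rw [setOf_qLe_mk_eq_image hact, hr]
    simp only [Set.image_insert_eq, Set.image_singleton, orbitRel.Quotient.quotient_smul_eq,
      Set.insert_idem]

theorem isTranslative_of_forall_isAtom
    (hsimp : ∀ p : P, ∃ m : ℕ, Nonempty (Set.Iic p ≃o Finset (Fin m)))
    (h : ∀ (a u : P) (g : G), IsAtom a → a ≤ u → g • a ≤ u → g • a = a) :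
    IsTranslative G P := by
  rintro p g ⟨u, hpu, hgpu⟩
  obtain ⟨m, ⟨e⟩⟩ := hsimp u
  suffices (⟨g • p, hgpu⟩ : Set.Iic u) = ⟨p, hpu⟩ from congrArg Subtype.val this
  refine (eq_iff_atom_le_iff_of_orderIso_finset e).2 fun c hc ↦ ?_
  have hc' : IsAtom (c : P) := hc.of_isAtom_coe_Iic
  change (c : P) ≤ g • p ↔ (c : P) ≤ p
  constructor
  · intro hcg
    have hinv : g⁻¹ • (c : P) ≤ p := by rwa [hact g, smul_inv_smul]
    rwa [← h c u g⁻¹ hc' c.2 (hinv.trans hpu)]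
  · intro hcp
    have hg : g • (c : P) ≤ g • p := (hact g _ _).1 hcp
    rwa [h c u g hc' c.2 (hg.trans hgpu)] at hg

theorem isTranslative_of_card_qLe
    (hsimp : ∀ p : P, ∃ m : ℕ, Nonempty (Set.Iic p ≃o Finset (Fin m)))
    (hcard : ∀ X : Quotient (orbitRel G P), ∃ m : ℕ, Nat.card {Y // QLe Y X} = 2 ^ m) :
    IsTranslative G P := by
  refine isTranslative_of_forall_isAtom hact hsimp fun a u g ha hau hgau ↦ ?_
  by_contra hne
  obtain ⟨k, ⟨e⟩⟩ := hsimp u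
  obtain ⟨X, hX⟩ := exists_ncard_setOf_qLe_eq_three hact e ha hau hgau hne
  obtain ⟨m, hm⟩ := hcard X
  have h3 : Nat.card {Y // QLe Y X} = 3 := hX
  rcases m with _ | m <;> simp only [pow_zero, pow_succ] at hm <;> omega

end OrderBot

end OrbitQuotient

theorem quotient_simplicial_iff_translative_general
    {G P : Type*} [Group G] [PartialOrder P] [OrderBot P] [MulAction G P]
    (hact : ∀ (g : G) (x y : P), x ≤ y ↔ g • x ≤ g • y)
    (hsimp : ∀ p : P, ∃ m : ℕ, Nonempty (Set.Iic p ≃o Finset (Fin m))) :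
    (∀ (p : P) (g : G), (∃ u : P, p ≤ u ∧ g • p ≤ u) → g • p = p) ↔
    ((∀ X Y : Quotient (MulAction.orbitRel G P), QLe X Y → QLe Y X → X = Y) ∧
      ∀ X : Quotient (MulAction.orbitRel G P), ∃ m : ℕ,
        ∃ e : {Y : Quotient (MulAction.orbitRel G P) // QLe Y X} ≃ Finset (Fin m),
          ∀ A B : {Y : Quotient (MulAction.orbitRel G P) // QLe Y X},
            QLe A.1 B.1 ↔ e A ≤ e B) := by
  constructor
  · intro htr
    refine ⟨qLe_antisymm hact htr, fun X ↦ ?_⟩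
    induction X using Quotient.inductionOn with | h p => ?_
    obtain ⟨m, ⟨ι⟩⟩ := hsimp p
    exact ⟨m, exists_equiv_qLe_of_orderIso hact htr ι⟩
  · rintro ⟨-, hbool⟩
    refine isTranslative_of_card_qLe hact hsimp fun X ↦ ?_
    obtain ⟨m, e, -⟩ := hbool X
    exact ⟨m, by rw [Nat.card_congr e, Nat.card_eq_fintype_card, Fintype.card_finset,
      Fintype.card_fin]⟩

/-- Let `G` act by order automorphisms on a simplicial poset `P`
(a countable finite-length poset with `⊥` all of whose lower intervals are Boolean
algebras).  Then the quotient `P/G` is a simplicial poset (the orbit relation is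
antisymmetric and all its lower intervals are Boolean algebras) if and only if the
action is translative. -/
theorem quotient_simplicial_iff_translative
    {G P : Type*} [Group G] [PartialOrder P] [OrderBot P] [Countable P] [MulAction G P]
    (hact : ∀ (g : G) (x y : P), x ≤ y ↔ g • x ≤ g • y)
    (n : ℕ)
    (hlen : ∀ c : Finset P, IsChain (· ≤ ·) (c : Set P) → c.card ≤ n + 1)
    (hsimp : ∀ p : P, ∃ m : ℕ, Nonempty (Set.Iic p ≃o Finset (Fin m))) :
    (∀ (p : P) (g : G), (∃ u : P, p ≤ u ∧ g • p ≤ u) → g • p = p) ↔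
    ((∀ X Y : Quotient (MulAction.orbitRel G P), QLe X Y → QLe Y X → X = Y) ∧
      ∀ X : Quotient (MulAction.orbitRel G P), ∃ m : ℕ,
        ∃ e : {Y : Quotient (MulAction.orbitRel G P) // QLe Y X} ≃ Finset (Fin m),
          ∀ A B : {Y : Quotient (MulAction.orbitRel G P) // QLe Y X},
            QLe A.1 B.1 ↔ e A ≤ e B) :=
  quotient_simplicial_iff_translative_general hact hsimp
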